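/- Let n = 2m ≥ 4 and let x and y be involutions of W(D̃_n), both of labelled cycle type (m, 0, 0, 0). Then x and y are conjugate in W(D̃_n) if and only if minus(x) ≡ minus(y) (mod 4) and f(x) ≡ f(y) (mod 4). Consequently the involutions of labelled cycle type (m, 0, 0, 0) form exactly four conjugacy classes of W(D̃_n). -/

import Mathlib

noncomputable section

open Equiv Finset

/-- Points `±1, …, ±n`, encoded as a sign together with an index. -/
abbrev Pt (n : ℕ) := ℤˣ × Fin n

/-- Negation of a point. -/
def negPt {n : ℕ} (x : Pt n) : Pt n := (-x.1, x.2)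

/-- The hyperoctahedral group `H_n` of signed permutations: bijections `σ` of `{±1,…,±n}`
with `σ(-i) = -σ(i)`. -/
def Hgrp (n : ℕ) : Subgroup (Equiv.Perm (Pt n)) where
  carrier := {σ | ∀ x, σ (negPt x) = negPt (σ x)}
  one_mem' := fun _ => rfl
  mul_mem' := by
    intro σ τ hσ hτ x
    have hσ' : ∀ y, σ (negPt y) = negPt (σ y) := hσ
    have hτ' : ∀ y, τ (negPt y) = negPt (τ y) := hτ
    simp only [Equiv.Perm.mul_apply]
    rw [hτ' x, hσ' (τ x)]
  inv_mem' := by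
    intro σ hσ x
    have hσ' : ∀ y, σ (negPt y) = negPt (σ y) := hσ
    apply σ.injective
    have hinv : ∀ z, σ (σ⁻¹ z) = z := fun z => σ.apply_symm_apply z
    rw [hinv, hσ', hinv]

lemma Hgrp_apply {n : ℕ} {σ : Equiv.Perm (Pt n)} (hσ : σ ∈ Hgrp n) (δ : ℤˣ) (k : Fin n) :
    σ (δ, k) = (δ * (σ (1, k)).1, (σ (1, k)).2) := by
  have hσ' : ∀ y, σ (negPt y) = negPt (σ y) := hσ
  rcases Int.units_eq_one_or δ with h | h <;> subst h
  · simp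
  · have h2 := hσ' (1, k)
    simp only [negPt] at h2
    simpa using h2

/-- The (right) action of a signed permutation on integer vectors:
`(v^σ)_j = ε·v_i` whenever `σ(i) = ε j`. -/
def actV {n : ℕ} (σ : Equiv.Perm (Pt n)) (v : Fin n → ℤ) : Fin n → ℤ :=
  fun j => ((σ (1, j)).1 : ℤ) * v (σ (1, j)).2

lemma actV_add {n : ℕ} (σ : Equiv.Perm (Pt n)) (a b : Fin n → ℤ) :
    actV σ (a + b) = actV σ a + actV σ b := by
  funext j; simp [actV, mul_add]

lemma actV_zero {n : ℕ} (σ : Equiv.Perm (Pt n)) : actV σ 0 = 0 := by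
  funext j; simp [actV]

lemma actV_neg {n : ℕ} (σ : Equiv.Perm (Pt n)) (v : Fin n → ℤ) :
    actV σ (-v) = -actV σ v := by
  funext j; simp [actV]

lemma actV_one {n : ℕ} (v : Fin n → ℤ) : actV 1 v = v := by
  funext j; simp [actV]

lemma actV_mul {n : ℕ} {σ : Equiv.Perm (Pt n)} (hσ : σ ∈ Hgrp n) (τ : Equiv.Perm (Pt n))
    (v : Fin n → ℤ) : actV (σ * τ) v = actV τ (actV σ v) := by
  funext j
  have h := Hgrp_apply hσ (τ (1, j)).1 (τ (1, j)).2
  rw [Prod.mk.eta] at h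
  simp only [actV, Equiv.Perm.mul_apply, h]
  push_cast
  ring

/-- The affine Weyl group of type `C̃ₙ`: pairs `(σ, v)` with `σ` a signed permutation and
`v ∈ ℤⁿ`, with multiplication `(σ,v)(τ,u) = (στ, v^τ + u)`. -/
@[ext] structure WC (n : ℕ) where
  sigma : Hgrp n
  vec : Fin n → ℤ

namespace WC

variable {n : ℕ}

instance : Mul (WC n) :=
  ⟨fun x y => ⟨x.sigma * y.sigma, actV (y.sigma : Equiv.Perm (Pt n)) x.vec + y.vec⟩⟩

instance : One (WC n) := ⟨⟨1, 0⟩⟩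

instance : Inv (WC n) :=
  ⟨fun x => ⟨x.sigma⁻¹, -actV ((x.sigma⁻¹ : Hgrp n) : Equiv.Perm (Pt n)) x.vec⟩⟩

@[simp] lemma mul_sigma (x y : WC n) : (x * y).sigma = x.sigma * y.sigma := rfl
@[simp] lemma mul_vec (x y : WC n) :
    (x * y).vec = actV (y.sigma : Equiv.Perm (Pt n)) x.vec + y.vec := rfl
@[simp] lemma one_sigma : (1 : WC n).sigma = 1 := rfl
@[simp] lemma one_vec : (1 : WC n).vec = 0 := rfl
@[simp] lemma inv_sigma (x : WC n) : (x⁻¹).sigma = x.sigma⁻¹ := rfl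
@[simp] lemma inv_vec (x : WC n) :
    (x⁻¹).vec = -actV ((x.sigma⁻¹ : Hgrp n) : Equiv.Perm (Pt n)) x.vec := rfl

instance : Group (WC n) where
  mul_assoc a b c := by
    refine WC.ext ?_ ?_
    · exact mul_assoc _ _ _
    · show actV (c.sigma : Equiv.Perm (Pt n))
          (actV (b.sigma : Equiv.Perm (Pt n)) a.vec + b.vec) + c.vec
        = actV (((b.sigma * c.sigma : Hgrp n)) : Equiv.Perm (Pt n)) a.vec
          + (actV (c.sigma : Equiv.Perm (Pt n)) b.vec + c.vec)
      rw [actV_add]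
      have hc : (((b.sigma * c.sigma : Hgrp n)) : Equiv.Perm (Pt n))
          = (b.sigma : Equiv.Perm (Pt n)) * (c.sigma : Equiv.Perm (Pt n)) := rfl
      rw [hc, actV_mul b.sigma.2]
      abel
  one_mul a := by
    refine WC.ext (one_mul _) ?_
    show actV (a.sigma : Equiv.Perm (Pt n)) 0 + a.vec = a.vec
    rw [actV_zero, zero_add]
  mul_one a := by
    refine WC.ext (mul_one _) ?_
    show actV ((1 : Hgrp n) : Equiv.Perm (Pt n)) a.vec + 0 = a.vec
    have h1 : ((1 : Hgrp n) : Equiv.Perm (Pt n)) = 1 := rfl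
    rw [h1, actV_one, add_zero]
  inv_mul_cancel a := by
    refine WC.ext (inv_mul_cancel _) ?_
    show actV (a.sigma : Equiv.Perm (Pt n))
        (-actV ((a.sigma⁻¹ : Hgrp n) : Equiv.Perm (Pt n)) a.vec) + a.vec = 0
    rw [actV_neg, ← actV_mul (a.sigma⁻¹ : Hgrp n).2]
    have h1 : ((a.sigma⁻¹ : Hgrp n) : Equiv.Perm (Pt n)) * (a.sigma : Equiv.Perm (Pt n)) = 1 := by
      rw [← Subgroup.coe_mul, inv_mul_cancel, Subgroup.coe_one]
    rw [h1, actV_one, neg_add_cancel]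

end WC

/-- `Σw`: the coordinate sum of the translation part. -/
def sumV {n : ℕ} (x : WC n) : ℤ := ∑ i, x.vec i

/-- `minus(w)`: the number of `i ∈ {1,…,n}` with `σ(i) < 0`. -/
def minusCard {n : ℕ} (x : WC n) : ℕ :=
  (Finset.univ.filter fun i : Fin n => ((x.sigma : Equiv.Perm (Pt n)) (1, i)).1 = -1).card
lemma permOf_bij {n : ℕ} (σ : Hgrp n) :
    Function.Bijective (fun i : Fin n => ((σ : Equiv.Perm (Pt n)) (1, i)).2) := by
  rw [Fintype.bijective_iff_injective_and_card]
  refine ⟨?_, rfl⟩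
  intro i j hij
  simp only at hij
  have hmem : ∀ y, (σ : Equiv.Perm (Pt n)) (negPt y) = negPt ((σ : Equiv.Perm (Pt n)) y) := σ.2
  by_cases h1 : ((σ : Equiv.Perm (Pt n)) (1, i)).1 = ((σ : Equiv.Perm (Pt n)) (1, j)).1
  · have heq : (σ : Equiv.Perm (Pt n)) (1, i) = (σ : Equiv.Perm (Pt n)) (1, j) :=
      Prod.ext h1 hij
    have h2 := (σ : Equiv.Perm (Pt n)).injective heq
    exact congrArg Prod.snd h2
  · exfalso
    have hfst : ((σ : Equiv.Perm (Pt n)) (1, i)).1 = -((σ : Equiv.Perm (Pt n)) (1, j)).1 := by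
      rcases Int.units_eq_one_or ((σ : Equiv.Perm (Pt n)) (1, i)).1 with ha | ha <;>
        rcases Int.units_eq_one_or ((σ : Equiv.Perm (Pt n)) (1, j)).1 with hb | hb <;>
        first
          | exact absurd (ha.trans hb.symm) h1
          | simp [ha, hb]
    have hne : (σ : Equiv.Perm (Pt n)) (1, i) = negPt ((σ : Equiv.Perm (Pt n)) (1, j)) :=
      Prod.ext hfst hij
    rw [← hmem (1, j)] at hne
    have h3 := (σ : Equiv.Perm (Pt n)).injective hne
    have h4 := congrArg Prod.fst h3
    simp only [negPt] at h4
    exact absurd h4 (by decide)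

/-- The underlying (unsigned) permutation of `{1,…,n}` induced by a signed permutation. -/
def permOf {n : ℕ} (σ : Hgrp n) : Equiv.Perm (Fin n) :=
  Equiv.ofBijective _ (permOf_bij σ)

@[simp] lemma permOf_apply {n : ℕ} (σ : Hgrp n) (i : Fin n) :
    permOf σ i = ((σ : Equiv.Perm (Pt n)) (1, i)).2 := rfl

lemma unitsCast_zmod2 (ε : ℤˣ) : (((ε : ℤ) : ZMod 2)) = 1 := by
  rcases Int.units_eq_one_or ε with h | h <;> subst h <;> decide

lemma sumV_mul {n : ℕ} (x y : WC n) :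
    ((sumV (x * y) : ℤ) : ZMod 2) = ((sumV x : ℤ) : ZMod 2) + ((sumV y : ℤ) : ZMod 2) := by
  have key : ∀ (σ : Hgrp n) (v : Fin n → ℤ),
      (∑ i, ((actV (σ : Equiv.Perm (Pt n)) v i : ℤ) : ZMod 2)) = ∑ i, ((v i : ℤ) : ZMod 2) := by
    intro σ v
    have hterm : ∀ i, ((actV (σ : Equiv.Perm (Pt n)) v i : ℤ) : ZMod 2)
        = ((v (permOf σ i) : ℤ) : ZMod 2) := by
      intro i
      show ((((((σ : Equiv.Perm (Pt n)) (1, i)).1 : ℤ)) * v (((σ : Equiv.Perm (Pt n)) (1, i)).2) : ℤ) : ZMod 2) = _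
      push_cast
      rw [unitsCast_zmod2, one_mul]
      rfl
    rw [Finset.sum_congr rfl (fun i _ => hterm i)]
    exact Equiv.sum_comp (permOf σ) (fun i => ((v i : ℤ) : ZMod 2))
  have hvec : (x * y).vec = actV (y.sigma : Equiv.Perm (Pt n)) x.vec + y.vec := rfl
  unfold sumV
  rw [hvec]
  have hsplit : (∑ i, (actV (y.sigma : Equiv.Perm (Pt n)) x.vec + y.vec) i)
      = (∑ i, actV (y.sigma : Equiv.Perm (Pt n)) x.vec i) + ∑ i, y.vec i := by
    rw [← Finset.sum_add_distrib]; rfl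
  rw [hsplit]
  push_cast
  rw [key y.sigma x.vec]

lemma minusCard_one {n : ℕ} : minusCard (1 : WC n) = 0 := by
  unfold minusCard
  rw [Finset.card_eq_zero, Finset.filter_eq_empty_iff]
  intro i _
  show ¬ (((1 : Hgrp n) : Equiv.Perm (Pt n)) (1, i)).1 = -1
  simp only [OneMemClass.coe_one, Equiv.Perm.one_apply]
  decide

lemma ite_units_mul (u w : ℤˣ) :
    ((if u * w = -1 then (1 : ZMod 2) else 0)) =
      (if u = -1 then (1 : ZMod 2) else 0) + (if w = -1 then (1 : ZMod 2) else 0) := by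
  rcases Int.units_eq_one_or u with h | h <;> rcases Int.units_eq_one_or w with h' | h' <;>
    subst h <;> subst h' <;> decide

lemma minusCard_mul {n : ℕ} (x y : WC n) :
    ((minusCard (x * y) : ℕ) : ZMod 2) = (minusCard x : ZMod 2) + (minusCard y : ZMod 2) := by
  have hσ : ∀ i : Fin n, ((x * y).sigma : Equiv.Perm (Pt n)) (1, i)
      = (x.sigma : Equiv.Perm (Pt n)) ((y.sigma : Equiv.Perm (Pt n)) (1, i)) := fun i => rfl
  unfold minusCard
  rw [Finset.card_filter, Finset.card_filter, Finset.card_filter]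
  push_cast
  have step : ∀ i : Fin n,
      ((if (((x * y).sigma : Equiv.Perm (Pt n)) (1, i)).1 = -1 then (1 : ZMod 2) else 0))
      = (if ((y.sigma : Equiv.Perm (Pt n)) (1, i)).1 = -1 then (1 : ZMod 2) else 0)
        + (if ((x.sigma : Equiv.Perm (Pt n)) (1, permOf y.sigma i)).1 = -1
            then (1 : ZMod 2) else 0) := by
    intro i
    rw [hσ i]
    have h := Hgrp_apply x.sigma.2 ((y.sigma : Equiv.Perm (Pt n)) (1, i)).1
      ((y.sigma : Equiv.Perm (Pt n)) (1, i)).2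
    rw [Prod.mk.eta] at h
    rw [h]
    exact ite_units_mul _ _
  calc (∑ i : Fin n, if (((x * y).sigma : Equiv.Perm (Pt n)) (1, i)).1 = -1
          then (1 : ZMod 2) else 0)
      = ∑ i : Fin n, ((if ((y.sigma : Equiv.Perm (Pt n)) (1, i)).1 = -1 then (1 : ZMod 2) else 0)
        + (if ((x.sigma : Equiv.Perm (Pt n)) (1, permOf y.sigma i)).1 = -1
            then (1 : ZMod 2) else 0)) := Finset.sum_congr rfl (fun i _ => step i)
    _ = (∑ i : Fin n, if ((y.sigma : Equiv.Perm (Pt n)) (1, i)).1 = -1 then (1 : ZMod 2) else 0)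
        + ∑ i : Fin n, (if ((x.sigma : Equiv.Perm (Pt n)) (1, permOf y.sigma i)).1 = -1
            then (1 : ZMod 2) else 0) := Finset.sum_add_distrib
    _ = (∑ i : Fin n, if ((x.sigma : Equiv.Perm (Pt n)) (1, i)).1 = -1 then (1 : ZMod 2) else 0)
        + ∑ i : Fin n, (if ((y.sigma : Equiv.Perm (Pt n)) (1, i)).1 = -1
            then (1 : ZMod 2) else 0) := by
          rw [add_comm]
          congr 1
          exact Equiv.sum_comp (permOf y.sigma)
            (fun k => if ((x.sigma : Equiv.Perm (Pt n)) (1, k)).1 = -1 then (1 : ZMod 2) else 0)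
lemma even_int_iff_zmod {a : ℤ} : Even a ↔ ((a : ZMod 2) = 0) := by
  rw [ZMod.intCast_zmod_eq_zero_iff_dvd a 2, Int.even_iff]
  push_cast
  omega

lemma sumV_one {n : ℕ} : sumV (1 : WC n) = 0 := by simp [sumV]

/-- The affine Weyl group of type `B̃ₙ`: the elements `w` of `W(C̃ₙ)` with `Σw` even. -/
def WB (n : ℕ) : Subgroup (WC n) where
  carrier := {w | Even (sumV w)}
  one_mem' := by
    show Even (sumV (1 : WC n))
    rw [sumV_one]
    exact ⟨0, by simp⟩
  mul_mem' := by
    intro a b ha hb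
    have ha' : ((sumV a : ℤ) : ZMod 2) = 0 := even_int_iff_zmod.mp ha
    have hb' : ((sumV b : ℤ) : ZMod 2) = 0 := even_int_iff_zmod.mp hb
    refine even_int_iff_zmod.mpr ?_
    rw [sumV_mul, ha', hb', add_zero]
  inv_mem' := by
    intro a ha
    have ha' : ((sumV a : ℤ) : ZMod 2) = 0 := even_int_iff_zmod.mp ha
    refine even_int_iff_zmod.mpr ?_
    have h1 := sumV_mul a⁻¹ a
    rw [inv_mul_cancel, sumV_one, ha', add_zero] at h1
    simpa using h1.symm

lemma intModEq_two_iff {a b : ℤ} : a ≡ b [ZMOD 2] ↔ ((a : ZMod 2) = (b : ZMod 2)) :=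
  (ZMod.intCast_eq_intCast_iff a b 2).symm

/-- The second copy `B̄(B̃ₙ)` of the affine Weyl group of type `B̃ₙ` inside `W(C̃ₙ)`:
elements with `Σw ≡ minus(w) (mod 2)`. -/
def Bbar (n : ℕ) : Subgroup (WC n) where
  carrier := {w | sumV w ≡ (minusCard w : ℤ) [ZMOD 2]}
  one_mem' := by
    show sumV (1 : WC n) ≡ ((minusCard (1 : WC n) : ℤ)) [ZMOD 2]
    rw [sumV_one, minusCard_one]
    rfl
  mul_mem' := by
    intro a b ha hb
    have ha' := intModEq_two_iff.mp ha
    have hb' := intModEq_two_iff.mp hb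
    refine intModEq_two_iff.mpr ?_
    rw [sumV_mul, ha', hb']
    push_cast at ha' hb' ⊢
    rw [minusCard_mul]
  inv_mem' := by
    intro a ha
    have ha' := intModEq_two_iff.mp ha
    refine intModEq_two_iff.mpr ?_
    have h1 := sumV_mul a⁻¹ a
    have h2 := minusCard_mul a⁻¹ a
    rw [inv_mul_cancel, sumV_one] at h1
    rw [inv_mul_cancel, minusCard_one] at h2
    push_cast at ha' h1 h2 ⊢
    linear_combination h1.symm - h2.symm - ha'

/-- The affine Weyl group of type `D̃ₙ`, as the intersection of the two `B̃ₙ`'s. -/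
def WD (n : ℕ) : Subgroup (WC n) := WB n ⊓ Bbar n

instance : DecidablePred (fun k : ℤ => Even k) := fun _ => decidable_of_iff _ Int.even_iff.symm
instance : DecidablePred (fun k : ℤ => Odd k) := fun _ => decidable_of_iff _ Int.odd_iff.symm

/-- The labelled cycle type `(m, k_e, k_o, l)` of an element of `W(C̃ₙ)` (intended for
involutions): `m` is the number of 2-cycles of `σ`, `k_e` (resp. `k_o`) is the number of
`i` with `σ(i) = -i` whose label `v_i` is even (resp. odd), and `l` is the number of fixed
points of `σ`. -/
def lct {n : ℕ} (x : WC n) : ℕ × ℕ × ℕ × ℕ :=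
  ((Finset.univ.filter fun i : Fin n => ((x.sigma : Equiv.Perm (Pt n)) (1, i)).2 ≠ i).card / 2,
   (Finset.univ.filter fun i : Fin n =>
      (x.sigma : Equiv.Perm (Pt n)) (1, i) = (-1, i) ∧ Even (x.vec i)).card,
   (Finset.univ.filter fun i : Fin n =>
      (x.sigma : Equiv.Perm (Pt n)) (1, i) = (-1, i) ∧ Odd (x.vec i)).card,
   (Finset.univ.filter fun i : Fin n => (x.sigma : Equiv.Perm (Pt n)) (1, i) = (1, i)).card)

/-- `f(x)`: twice the sum of the labels over one chosen entry of each 2-cycle (we choose the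
entry with the smaller index), plus the sum of the labels over the negative 1-cycles.  Only
its residue modulo 4 is ever used, and for involutions that residue does not depend on the
choice of entries. -/
def fval {n : ℕ} (x : WC n) : ℤ :=
  2 * (∑ i ∈ Finset.univ.filter
        (fun i : Fin n => i < ((x.sigma : Equiv.Perm (Pt n)) (1, i)).2), x.vec i)
  + ∑ i ∈ Finset.univ.filter
      (fun i : Fin n => (x.sigma : Equiv.Perm (Pt n)) (1, i) = (-1, i)), x.vec i

/-- The commuting graph on a set `X` of elements of a group: vertices are the elements
of `X`, and distinct vertices are adjacent exactly when they commute.  When `X` is a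
conjugacy class of involutions this is the commuting involution graph `C(G,X)`. -/
def commGraph {M : Type*} [Group M] (X : Set M) : SimpleGraph X where
  Adj a b := a ≠ b ∧ (a : M) * (b : M) = (b : M) * (a : M)
  symm := ⟨fun a b h => ⟨h.1.symm, h.2.symm⟩⟩
  loopless := ⟨fun a h => h.1 rfl⟩

/-- The conjugacy class of `x` under conjugation by a subgroup `G`. -/
def ConjugacyClassOf {M : Type*} [Group M] (G : Subgroup M) (x : M) : Set M :=
  {y | ∃ g ∈ G, g⁻¹ * x * g = y}

/-- `X` is a conjugacy class of involutions of the subgroup `G`. -/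
def IsInvolutionConjClass {M : Type*} [Group M] (G : Subgroup M) (X : Set M) : Prop :=
  ∃ x ∈ G, orderOf x = 2 ∧ X = ConjugacyClassOf G x

/-- Sign change at the single coordinate `k`. -/
def negAt {n : ℕ} (k : Fin n) : Equiv.Perm (Pt n) :=
  Function.Involutive.toPerm (fun p => if p.2 = k then (-p.1, p.2) else p) (by
    intro p
    by_cases h : p.2 = k <;> simp [h, Prod.ext_iff])

lemma negAt_mem {n : ℕ} (k : Fin n) : negAt k ∈ Hgrp n := by
  intro p
  show (if (negPt p).2 = k then (-(negPt p).1, (negPt p).2) else negPt p)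
      = negPt (if p.2 = k then (-p.1, p.2) else p)
  by_cases h : p.2 = k <;> simp [negPt, h]

/-- The positive transposition of the coordinates `a` and `b`. -/
def swapPos {n : ℕ} (a b : Fin n) : Equiv.Perm (Pt n) :=
  Equiv.prodCongr (Equiv.refl ℤˣ) (Equiv.swap a b)

lemma swapPos_mem {n : ℕ} (a b : Fin n) : swapPos a b ∈ Hgrp n := fun _ => rfl

/-- The negative transposition of the coordinates `a` and `b` (for `a ≠ b` it sends
`a ↦ -b` and `b ↦ -a`). -/
def negSwap {n : ℕ} (a b : Fin n) : Equiv.Perm (Pt n) := negAt b * negAt a * swapPos a b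

lemma negSwap_mem {n : ℕ} (a b : Fin n) : negSwap a b ∈ Hgrp n :=
  mul_mem (mul_mem (negAt_mem b) (negAt_mem a)) (swapPos_mem a b)

/-- Constructor for elements of `W(C̃ₙ)`. -/
def mkW {n : ℕ} (σ : Equiv.Perm (Pt n)) (h : σ ∈ Hgrp n) (v : Fin n → ℤ) : WC n := ⟨⟨σ, h⟩, v⟩

/-- The simple reflection `r₁ = (σ, 0)` with `σ(1) = -1` (take `k = 0`); more generally
`(σ, 0)` with `σ(k) = -k`. -/
def rFirstGen (n : ℕ) (k : Fin n) : WC n := mkW (negAt k) (negAt_mem k) 0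

/-- The simple reflections `rᵢ = (σ, 0)`, `2 ≤ i ≤ n`, where `σ` exchanges `a` and `b`
positively (take `a, b` adjacent). -/
def swapGen (n : ℕ) (a b : Fin n) : WC n := mkW (swapPos a b) (swapPos_mem a b) 0

/-- The simple reflection `r_{n+1} = (σ, eₙ)` with `σ(n) = -n` (take `k = n-1`). -/
def rLastGen (n : ℕ) (k : Fin n) : WC n := mkW (negAt k) (negAt_mem k) (Pi.single k 1)

/-- The reflections `s = (σ, e_{n-1} + eₙ)` (take `a = n-2`, `b = n-1`) and
`t = (σ, e₁ + e₂)` (take `a = 0`, `b = 1`), where `σ(a) = -b`, `σ(b) = -a`. -/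
def negSwapGen (n : ℕ) (a b : Fin n) : WC n :=
  mkW (negSwap a b) (negSwap_mem a b) (Pi.single a 1 + Pi.single b 1)

/-- The projection `π : W(C̃ₙ) → Hₙ`, `(σ, v) ↦ σ`. -/
def projHom (n : ℕ) : WC n →* Equiv.Perm (Pt n) where
  toFun x := (x.sigma : Equiv.Perm (Pt n))
  map_one' := rfl
  map_mul' _ _ := rfl

/-- The action of a signed permutation on real vectors. -/
def actR {n : ℕ} (σ : Equiv.Perm (Pt n)) (u : Fin n → ℝ) : Fin n → ℝ :=
  fun j => (((σ (1, j)).1 : ℤ) : ℝ) * u (σ (1, j)).2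

/-- The affine action of `w = (σ,v) ∈ W(C̃ₙ)` on `ℝⁿ`: `u ↦ u^σ + v`. -/
def affAct {n : ℕ} (x : WC n) : (Fin n → ℝ) → (Fin n → ℝ) :=
  fun u => actR (x.sigma : Equiv.Perm (Pt n)) u + fun i => ((x.vec i : ℤ) : ℝ)

/-- The affine involution `φ` of `ℝⁿ` with `φ(u)ᵢ = 1/2 - u_{n+1-i}`. -/
def phiR (n : ℕ) : (Fin n → ℝ) → (Fin n → ℝ) := fun u i => 1 / 2 - u i.rev


/-!
An involution `x = (σ, v)` of labelled cycle type `(m, 0, 0, 0)` pairs off the coordinates.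
Over one entry `a` of each pair `{a, b}`, let `N(x)` count the pairs with `σ(a) = -b` and let
`O(x)` add up the labels `v_a`, both modulo 2. Since `minus(x)` and `f(x)` are twice the integers
that `N(x)` and `O(x)` reduce, the two congruences modulo 4 say that `(N, O)` agrees on `x`, `y`.

Comparing coordinates in `g y = x g` shows that conjugation by `g ∈ W(C̃ₙ)` adds to `(N, O)` the
signs and labels of `g` summed over both entries of every pair, that is `(minus(g), Σg)` modulo 2;
this shift vanishes exactly on `W(D̃ₙ)`. On the other hand all these involutions are conjugate in
`W(C̃ₙ)`: each is conjugate to the lift of its underlying permutation, and all fixed-point-free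
involutions of `{1, …, n}` have the same cycle type. So the `W(D̃ₙ)`-classes are the fibres of
`(N, O)`, and all four values occur because `(minus, Σ)` maps `W(C̃ₙ)` onto `(ℤ/2)²`.
-/

lemma Equiv.Perm.isConj_of_sq_eq_one {α : Type*} [Fintype α] [DecidableEq α] {σ τ : Perm α}
    (hσ : σ ^ 2 = 1) (hτ : τ ^ 2 = 1) (h : #σ.support = #τ.support) : IsConj σ τ := by
  have hσ' := cycleType_of_pow_prime_eq_one (p := 2) hσ
  have hτ' := cycleType_of_pow_prime_eq_one (p := 2) hτ
  rw [isConj_iff_cycleType_eq, hσ', hτ']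
  rw [← sum_cycleType, ← sum_cycleType, hσ', hτ', Multiset.sum_replicate,
    Multiset.sum_replicate, smul_eq_mul, smul_eq_mul] at h
  rw [Nat.eq_of_mul_eq_mul_right two_pos h]

section Transversal

variable {α M : Type*} [AddCommMonoid M] {p p' q : Perm α} {R R' : Finset α}

def IsTransversal (p : Perm α) (R : Finset α) : Prop := ∀ i, i ∈ R ↔ p i ∉ R

lemma IsTransversal.apply_mem_of_notMem (hR : IsTransversal p R) {i : α} (hi : i ∉ R) :
    p i ∈ R :=
  not_not.1 fun h => hi ((hR i).2 h)

lemma IsTransversal.sum_add_apply [Fintype α] [DecidableEq α] (hR : IsTransversal p R)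
    (hp : Function.Involutive p) (a : α → M) : ∑ i ∈ R, (a i + a (p i)) = ∑ i, a i := by
  rw [sum_add_distrib, ← sum_add_sum_compl R a]
  congr 1
  refine sum_nbij' p p (fun i hi => ?_) (fun i hi => ?_) (fun i _ => hp i) (fun i _ => hp i)
    (fun _ _ => rfl)
  · exact mem_compl.2 ((hR i).1 hi)
  · exact hR.apply_mem_of_notMem (mem_compl.1 hi)

lemma IsTransversal.sum_eq (hR : IsTransversal p R) (hR' : IsTransversal p R')
    (hp : Function.Involutive p) {w : α → M} (hw : ∀ i, w (p i) = w i) :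
    ∑ i ∈ R, w i = ∑ i ∈ R', w i := by
  classical
  refine sum_nbij' (fun i => if i ∈ R' then i else p i) (fun i => if i ∈ R then i else p i)
    (fun i hi => ?_) (fun i hi => ?_) (fun i hi => ?_) (fun i hi => ?_) (fun i _ => ?_)
  · split_ifs with h
    exacts [h, hR'.apply_mem_of_notMem h]
  · split_ifs with h
    exacts [h, hR.apply_mem_of_notMem h]
  · by_cases h : i ∈ R' <;> simp [h, hi, (hR i).1 hi, hp i]
  · by_cases h : i ∈ R <;> simp [h, hi, (hR' i).1 hi, hp i]
  · split_ifs
    exacts [rfl, (hw i).symm]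

lemma IsTransversal.map (hR : IsTransversal p' R) (hq : ∀ i, q (p' i) = p (q i)) :
    IsTransversal p (R.map q.toEmbedding) := by
  intro j
  obtain ⟨i, rfl⟩ := q.surjective j
  simp [← hq, hR i]

lemma IsTransversal.sum_comp_eq [DecidableEq α] (hR' : IsTransversal p' R')
    (hR : IsTransversal p R) (hp : Function.Involutive p) (hq : ∀ i, q (p' i) = p (q i))
    {w : α → M} (hw : ∀ i, w (p i) = w i) : ∑ i ∈ R', w (q i) = ∑ i ∈ R, w i := by
  rw [← (hR'.map hq).sum_eq hR hp hw, sum_map, Equiv.coe_toEmbedding]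

def lowerReps [Fintype α] [LinearOrder α] (p : Perm α) : Finset α := univ.filter fun i => i < p i

lemma isTransversal_lowerReps [Fintype α] [LinearOrder α] (hp : Function.Involutive p)
    (hfix : ∀ i, p i ≠ i) : IsTransversal p (lowerReps p) := by
  intro i
  simp only [lowerReps, mem_filter, mem_univ, true_and, hp i, not_lt]
  exact ⟨le_of_lt, fun h => lt_of_le_of_ne h (hfix i).symm⟩

end Transversal

lemma conjugacyClassOf_eq_iff {M : Type*} [Group M] {G : Subgroup M} {z w : M} :
    ConjugacyClassOf G z = ConjugacyClassOf G w ↔ ∃ g ∈ G, g⁻¹ * z * g = w := by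
  constructor
  · intro h
    have hw : w ∈ ConjugacyClassOf G w := ⟨1, G.one_mem, by group⟩
    rwa [← h] at hw
  · rintro ⟨g, hg, rfl⟩
    ext u
    constructor
    · rintro ⟨h, hh, rfl⟩
      exact ⟨g⁻¹ * h, mul_mem (inv_mem hg) hh, by group⟩
    · rintro ⟨h, hh, rfl⟩
      exact ⟨g * h, mul_mem hg hh, by group⟩

def signBit (ε : ℤˣ) : ZMod 2 := if ε = -1 then 1 else 0

lemma signBit_mul (a b : ℤˣ) : signBit (a * b) = signBit a + signBit b := ite_units_mul a b

lemma natCast_card_filter_eq_neg_one {ι : Type*} (s : Finset ι) (t : ι → ℤˣ) :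
    (#(s.filter fun i => t i = -1) : ZMod 2) = ∑ i ∈ s, signBit (t i) := by
  rw [card_filter]
  push_cast
  rfl

namespace WC

variable {n : ℕ} {x y : WC n}

def sign (x : WC n) (i : Fin n) : ℤˣ := ((x.sigma : Perm (Pt n)) (1, i)).1

def perm (x : WC n) : Perm (Fin n) := permOf x.sigma

lemma sigma_apply (x : WC n) (δ : ℤˣ) (i : Fin n) :
    (x.sigma : Perm (Pt n)) (δ, i) = (δ * x.sign i, x.perm i) :=
  Hgrp_apply x.sigma.2 δ i

lemma sigma_apply_one (x : WC n) (i : Fin n) :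
    (x.sigma : Perm (Pt n)) (1, i) = (x.sign i, x.perm i) := rfl

lemma mul_sigma_apply_one (x y : WC n) (i : Fin n) :
    ((x * y).sigma : Perm (Pt n)) (1, i) = (y.sign i * x.sign (y.perm i), x.perm (y.perm i)) := by
  show (x.sigma : Perm (Pt n)) ((y.sigma : Perm (Pt n)) (1, i)) = _
  rw [sigma_apply y, sigma_apply x, one_mul]

lemma sign_mul (x y : WC n) (i : Fin n) : (x * y).sign i = y.sign i * x.sign (y.perm i) :=
  congrArg Prod.fst (mul_sigma_apply_one x y i)

lemma perm_mul_apply (x y : WC n) (i : Fin n) : (x * y).perm i = x.perm (y.perm i) := by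
  show (((x * y).sigma : Perm (Pt n)) (1, i)).2 = _
  rw [mul_sigma_apply_one]

lemma perm_apply_perm_inv (g : WC n) (i : Fin n) : g.perm (g⁻¹.perm i) = i := by
  rw [← perm_mul_apply, mul_inv_cancel]
  rfl

lemma vec_mul_apply (x y : WC n) (i : Fin n) :
    (x * y).vec i = y.sign i * x.vec (y.perm i) + y.vec i := rfl

lemma ext_coords {x y : WC n} (hs : ∀ i, x.sign i = y.sign i) (hp : ∀ i, x.perm i = y.perm i)
    (hv : x.vec = y.vec) : x = y := by
  refine WC.ext (Subtype.ext (Equiv.ext fun ⟨δ, i⟩ => ?_)) hv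
  rw [sigma_apply, sigma_apply, hs, hp]

def signedPerm (t : Fin n → ℤˣ) (π : Perm (Fin n)) : Perm (Pt n) where
  toFun p := (p.1 * t p.2, π p.2)
  invFun p := (p.1 * t (π.symm p.2), π.symm p.2)
  left_inv p := by simp [mul_assoc, Int.units_mul_self]
  right_inv p := by simp [mul_assoc, Int.units_mul_self]

lemma signedPerm_mem (t : Fin n → ℤˣ) (π : Perm (Fin n)) : signedPerm t π ∈ Hgrp n :=
  fun p => by simp [signedPerm, negPt]

def ofCoords (t : Fin n → ℤˣ) (π : Perm (Fin n)) (v : Fin n → ℤ) : WC n :=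
  ⟨⟨signedPerm t π, signedPerm_mem t π⟩, v⟩

section ofCoords

variable (t : Fin n → ℤˣ) (π : Perm (Fin n)) (v : Fin n → ℤ)

@[simp] lemma sign_ofCoords (i : Fin n) : (ofCoords t π v).sign i = t i := one_mul _

@[simp] lemma perm_ofCoords (i : Fin n) : (ofCoords t π v).perm i = π i := rfl

@[simp] lemma vec_ofCoords : (ofCoords t π v).vec = v := rfl

end ofCoords

def liftPerm : Perm (Fin n) →* WC n where
  toFun π := ofCoords 1 π 0
  map_one' := ext_coords (fun _ => rfl) (fun _ => rfl) rfl
  map_mul' π ρ := ext_coords (fun i => by simp [sign_mul]) (fun i => by simp [perm_mul_apply])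
    (by funext i; simp [vec_mul_apply])

def parity (g : WC n) : ZMod 2 × ZMod 2 := ((minusCard g : ZMod 2), (sumV g : ZMod 2))

lemma parity_eq (g : WC n) :
    parity g = (∑ i, signBit (g.sign i), ∑ i, (g.vec i : ZMod 2)) := by
  rw [parity, minusCard, natCast_card_filter_eq_neg_one, sumV, Int.cast_sum]
  rfl

lemma mem_WD_iff {g : WC n} : g ∈ WD n ↔ parity g = 0 := by
  show Even (sumV g) ∧ sumV g ≡ minusCard g [ZMOD 2] ↔ _
  rw [even_int_iff_zmod, intModEq_two_iff, parity, Prod.ext_iff]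
  push_cast
  constructor <;> rintro ⟨h1, h2⟩ <;> simp_all

lemma parity_surjective (hn : 0 < n) : Function.Surjective (parity : WC n → ZMod 2 × ZMod 2) := by
  rintro ⟨a, b⟩
  obtain ⟨ε, rfl⟩ : ∃ ε : ℤˣ, signBit ε = a := by
    fin_cases a
    exacts [⟨1, rfl⟩, ⟨-1, rfl⟩]
  let i₀ : Fin n := ⟨0, hn⟩
  refine ⟨ofCoords (Function.update 1 i₀ ε) 1 (Pi.single i₀ (b.cast : ℤ)), ?_⟩
  rw [parity_eq]
  simp only [sign_ofCoords, vec_ofCoords]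
  rw [Fintype.sum_eq_single i₀ (fun j hj => by simp [hj, signBit]),
    Fintype.sum_eq_single i₀ (fun j hj => by simp [hj])]
  simp

structure IsFPFInvolution (x : WC n) : Prop where
  mul_self : x * x = 1
  perm_ne : ∀ i, x.perm i ≠ i

namespace IsFPFInvolution

lemma perm_involutive (hx : IsFPFInvolution x) : Function.Involutive x.perm := fun i => by
  rw [← perm_mul_apply, hx.mul_self]
  rfl

lemma sign_perm (hx : IsFPFInvolution x) (i : Fin n) : x.sign (x.perm i) = x.sign i := by
  have h := sign_mul x x i
  rw [hx.mul_self] at h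
  rw [eq_inv_of_mul_eq_one_right h.symm, Int.units_inv_eq_self]

lemma vec_perm (hx : IsFPFInvolution x) (i : Fin n) : x.vec (x.perm i) = -(x.sign i * x.vec i) := by
  have h := vec_mul_apply x x i
  rw [hx.mul_self, one_vec, Pi.zero_apply] at h
  have hs : (x.sign i : ℤ) * x.sign i = 1 := by rw [← Units.val_mul, Int.units_mul_self]; rfl
  linear_combination -(x.sign i : ℤ) * h - x.vec (x.perm i) * hs

lemma intCast_vec_perm (hx : IsFPFInvolution x) (i : Fin n) :
    (x.vec (x.perm i) : ZMod 2) = x.vec i := by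
  rw [hx.vec_perm, Int.cast_neg, Int.cast_mul, unitsCast_zmod2, one_mul, ZMod.neg_eq_self_mod_two]

lemma isTransversal (hx : IsFPFInvolution x) : IsTransversal x.perm (lowerReps x.perm) :=
  isTransversal_lowerReps hx.perm_involutive hx.perm_ne

lemma sum_eq_zero (hx : IsFPFInvolution x) {w : Fin n → ZMod 2}
    (hw : ∀ i, w (x.perm i) = w i) : ∑ i, w i = 0 := by
  rw [← hx.isTransversal.sum_add_apply hx.perm_involutive]
  simp [hw, CharTwo.add_self_eq_zero]

lemma parity_eq_zero (hx : IsFPFInvolution x) : parity x = 0 := by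
  rw [parity_eq, hx.sum_eq_zero fun i => by rw [hx.sign_perm],
    hx.sum_eq_zero hx.intCast_vec_perm]
  rfl

lemma mem_WD (hx : IsFPFInvolution x) : x ∈ WD n := mem_WD_iff.2 hx.parity_eq_zero

lemma conj (hx : IsFPFInvolution x) (g : WC n) : IsFPFInvolution (g⁻¹ * x * g) where
  mul_self := by
    calc g⁻¹ * x * g * (g⁻¹ * x * g) = g⁻¹ * (x * x) * g := by group
      _ = 1 := by rw [hx.mul_self, mul_one, inv_mul_cancel]
  perm_ne i h := by
    rw [perm_mul_apply, perm_mul_apply] at h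
    apply hx.perm_ne (g.perm i)
    rw [← perm_apply_perm_inv g (x.perm (g.perm i)), h]

end IsFPFInvolution

lemma isFPFInvolution_iff {m : ℕ} (hnm : n = 2 * m) (hn : 0 < n) :
    orderOf x = 2 ∧ lct x = (m, 0, 0, 0) ↔ IsFPFInvolution x := by
  simp only [orderOf_eq_prime_iff, lct, Prod.mk.injEq, card_eq_zero, filter_eq_empty_iff,
    mem_univ, true_implies, sigma_apply_one]
  constructor
  · rintro ⟨⟨hsq, -⟩, -, he, ho, hf⟩
    refine ⟨by rwa [sq] at hsq, fun i hi => ?_⟩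
    rcases Int.units_eq_one_or (x.sign i) with hs | hs
    · exact hf ⟨hs, hi⟩
    · rcases Int.even_or_odd (x.vec i) with hv | hv
      exacts [he ⟨⟨hs, hi⟩, hv⟩, ho ⟨⟨hs, hi⟩, hv⟩]
  · intro hx
    refine ⟨⟨by rw [sq, hx.mul_self], fun h => hx.perm_ne ⟨0, hn⟩ (by rw [h]; rfl)⟩, ?_,
      fun i h => hx.perm_ne i h.1.2, fun i h => hx.perm_ne i h.1.2, fun i h => hx.perm_ne i h.2⟩
    simp only [ne_eq, hx.perm_ne, not_false_eq_true, filter_true, card_univ, Fintype.card_fin]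
    omega

def negPairCount (x : WC n) : ℕ := #((lowerReps x.perm).filter fun i => x.sign i = -1)

def pairLabelSum (x : WC n) : ℤ := ∑ i ∈ lowerReps x.perm, x.vec i

def pairInvariant (x : WC n) : ZMod 2 × ZMod 2 := (negPairCount x, pairLabelSum x)

lemma pairInvariant_eq (x : WC n) :
    pairInvariant x = (∑ i ∈ lowerReps x.perm, signBit (x.sign i),
      ∑ i ∈ lowerReps x.perm, (x.vec i : ZMod 2)) := by
  rw [pairInvariant, negPairCount, natCast_card_filter_eq_neg_one, pairLabelSum, Int.cast_sum]

namespace IsFPFInvolution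

lemma minusCard_eq (hx : IsFPFInvolution x) : minusCard x = 2 * negPairCount x := by
  rw [minusCard, card_filter, negPairCount, card_filter, mul_sum,
    ← hx.isTransversal.sum_add_apply hx.perm_involutive]
  refine sum_congr rfl fun i _ => ?_
  by_cases h : x.sign i = -1 <;> simp [sigma_apply_one, hx.sign_perm, h]

lemma fval_eq (hx : IsFPFInvolution x) : fval x = 2 * pairLabelSum x := by
  rw [fval, filter_false_of_mem fun i _ h => hx.perm_ne i (congrArg Prod.snd h), sum_empty,
    add_zero]
  rfl

lemma pairInvariant_conj (hx : IsFPFInvolution x) (g : WC n) :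
    pairInvariant (g⁻¹ * x * g) = pairInvariant x + parity g := by
  set y := g⁻¹ * x * g
  have hy := hx.conj g
  have hgy : g * y = x * g := by simp only [y]; group
  have hperm (i : Fin n) : g.perm (y.perm i) = x.perm (g.perm i) := by
    rw [← perm_mul_apply, hgy, perm_mul_apply]
  have hsign (i : Fin n) : signBit (y.sign i) =
      signBit (g.sign i) + signBit (g.sign (y.perm i)) + signBit (x.sign (g.perm i)) := by
    have h := congrArg signBit ((sign_mul g y i).symm.trans (by rw [hgy, sign_mul]))
    rw [signBit_mul, signBit_mul] at h
    rw [eq_sub_of_add_eq h, CharTwo.sub_eq_add]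
    ring
  have hvec (i : Fin n) :
      (y.vec i : ZMod 2) = g.vec i + g.vec (y.perm i) + x.vec (g.perm i) := by
    have h := congrArg (Int.cast : ℤ → ZMod 2) (congrFun (congrArg WC.vec hgy) i)
    simp only [vec_mul_apply, Int.cast_add, Int.cast_mul, unitsCast_zmod2, one_mul] at h
    rw [eq_sub_of_add_eq' h, CharTwo.sub_eq_add]
    ring
  -- The `a`-terms run over both entries of every pair of `y`, and `g.perm` carries the pairs
  -- of `y` onto those of `x`.
  have hsum (a w : Fin n → ZMod 2) (hw : ∀ i, w (x.perm i) = w i) :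
      ∑ i ∈ lowerReps y.perm, (a i + a (y.perm i) + w (g.perm i)) =
        ∑ i ∈ lowerReps x.perm, w i + ∑ i, a i := by
    rw [sum_add_distrib, hy.isTransversal.sum_add_apply hy.perm_involutive,
      hy.isTransversal.sum_comp_eq hx.isTransversal hx.perm_involutive hperm hw, add_comm]
  rw [pairInvariant_eq, pairInvariant_eq, parity_eq]
  have hN := hsum (fun i => signBit (g.sign i)) (fun i => signBit (x.sign i))
    fun i => by rw [hx.sign_perm]
  have hO := hsum (fun i => (g.vec i : ZMod 2)) (fun i => (x.vec i : ZMod 2))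
    hx.intCast_vec_perm
  simp only [hsign, hvec, Prod.mk_add_mk]
  rw [hN, hO]

lemma isConj_liftPerm_perm (hx : IsFPFInvolution x) : IsConj (liftPerm x.perm) x := by
  obtain ⟨R, hR⟩ : ∃ R, IsTransversal x.perm R := ⟨_, hx.isTransversal⟩
  -- Off `R`, `g` carries the sign of `x` and the label of the partner: conjugating by `g` makes
  -- every pair positive with zero labels.
  let g := ofCoords (fun i => if i ∈ R then 1 else x.sign i) 1
    (fun i => if i ∈ R then 0 else x.vec (x.perm i))
  have hg : g * liftPerm x.perm = x * g := by
    refine ext_coords (fun i => ?_) (fun i => ?_) (funext fun i => ?_)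
    · by_cases hi : i ∈ R
      · simp [liftPerm, sign_mul, g, hi, (hR i).1 hi, hx.sign_perm]
      · simp [liftPerm, sign_mul, g, hi, hR.apply_mem_of_notMem hi]
    · simp [liftPerm, perm_mul_apply, g]
    · by_cases hi : i ∈ R
      · simp [liftPerm, vec_mul_apply, g, hi, (hR i).1 hi, hx.perm_involutive i]
      · simp [liftPerm, vec_mul_apply, g, hi, hR.apply_mem_of_notMem hi,
          hx.vec_perm]
  exact isConj_iff.2 ⟨g, by rw [hg, mul_inv_cancel_right]⟩

lemma isConj (hx : IsFPFInvolution x) (hy : IsFPFInvolution y) : IsConj x y := by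
  have hsq {z : WC n} (hz : IsFPFInvolution z) : z.perm ^ 2 = 1 :=
    Equiv.ext fun i => hz.perm_involutive i
  have hsupp {z : WC n} (hz : IsFPFInvolution z) : z.perm.support = univ :=
    eq_univ_of_forall fun i => Perm.mem_support.2 (hz.perm_ne i)
  have hperm : IsConj x.perm y.perm :=
    Perm.isConj_of_sq_eq_one (hsq hx) (hsq hy) (by rw [hsupp hx, hsupp hy])
  exact hx.isConj_liftPerm_perm.symm.trans
    ((liftPerm.map_isConj hperm).trans hy.isConj_liftPerm_perm)

lemma exists_conj_mem_WD_iff (hx : IsFPFInvolution x) (hy : IsFPFInvolution y) :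
    (∃ g ∈ WD n, g⁻¹ * x * g = y) ↔ pairInvariant x = pairInvariant y := by
  constructor
  · rintro ⟨g, hg, rfl⟩
    rw [hx.pairInvariant_conj, mem_WD_iff.1 hg, add_zero]
  · intro h
    obtain ⟨c, rfl⟩ := isConj_iff.1 (hx.isConj hy)
    have hc := hx.pairInvariant_conj c⁻¹
    rw [inv_inv, ← h] at hc
    exact ⟨c⁻¹, mem_WD_iff.2 (add_eq_left.1 hc.symm), by rw [inv_inv]⟩

lemma minusCard_modEq_iff (hx : IsFPFInvolution x) (hy : IsFPFInvolution y) :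
    minusCard x ≡ minusCard y [MOD 4] ↔ (pairInvariant x).1 = (pairInvariant y).1 := by
  rw [hx.minusCard_eq, hy.minusCard_eq, pairInvariant, pairInvariant,
    ZMod.natCast_eq_natCast_iff]
  exact Nat.ModEq.mul_left_cancel_iff' (m := 2) two_ne_zero

lemma fval_modEq_iff (hx : IsFPFInvolution x) (hy : IsFPFInvolution y) :
    fval x ≡ fval y [ZMOD 4] ↔ (pairInvariant x).2 = (pairInvariant y).2 := by
  rw [hx.fval_eq, hy.fval_eq, pairInvariant, pairInvariant, ZMod.intCast_eq_intCast_iff]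
  exact Int.ModEq.mul_left_cancel_iff' (m := 2) two_ne_zero

lemma ncard_conjugacyClasses (hn : 0 < n) (hx : IsFPFInvolution x) :
    {X | ∃ z : WC n, IsFPFInvolution z ∧ X = ConjugacyClassOf (WD n) z}.ncard = 4 := by
  obtain ⟨g, hg⟩ := (parity_surjective hn).hasRightInverse
  let rep (c : ZMod 2 × ZMod 2) : WC n := (g c)⁻¹ * x * g c
  have hrep (c : ZMod 2 × ZMod 2) : IsFPFInvolution (rep c) := hx.conj (g c)
  have hinv (c : ZMod 2 × ZMod 2) : pairInvariant (rep c) = pairInvariant x + c := by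
    rw [hx.pairInvariant_conj, hg c]
  have hclass {z w : WC n} (hz : IsFPFInvolution z) (hw : IsFPFInvolution w) :
      ConjugacyClassOf (WD n) z = ConjugacyClassOf (WD n) w ↔
        pairInvariant z = pairInvariant w :=
    conjugacyClassOf_eq_iff.trans (hz.exists_conj_mem_WD_iff hw)
  have hrange : {X | ∃ z : WC n, IsFPFInvolution z ∧ X = ConjugacyClassOf (WD n) z} =
      Set.range fun c => ConjugacyClassOf (WD n) (rep c) := by
    ext X
    constructor
    · rintro ⟨z, hz, rfl⟩
      exact ⟨pairInvariant z - pairInvariant x,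
        (hclass (hrep _) hz).2 (by rw [hinv, add_sub_cancel])⟩
    · rintro ⟨c, rfl⟩
      exact ⟨rep c, hrep c, rfl⟩
  rw [hrange, Set.ncard_range_of_injective fun c c' h => by
    simpa [hinv] using (hclass (hrep c) (hrep c')).1 h]
  simp

end IsFPFInvolution

end WC

theorem WD_four_classes_general (n m : ℕ) (hnm : n = 2 * m) (hn : 4 ≤ n)
    (x y : WC n) (h2x : orderOf x = 2) (h2y : orderOf y = 2)
    (hlx : lct x = (m, 0, 0, 0)) (hly : lct y = (m, 0, 0, 0)) :
    ((∃ g ∈ WD n, g⁻¹ * x * g = y) ↔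
      (minusCard x ≡ minusCard y [MOD 4] ∧ fval x ≡ fval y [ZMOD 4])) ∧
    {X : Set (WC n) | ∃ z ∈ (WD n : Set (WC n)), orderOf z = 2 ∧ lct z = (m, 0, 0, 0) ∧
        X = ConjugacyClassOf (WD n) z}.ncard = 4 := by
  have hn₀ : 0 < n := by omega
  have hx := (WC.isFPFInvolution_iff hnm hn₀).1 ⟨h2x, hlx⟩
  have hy := (WC.isFPFInvolution_iff hnm hn₀).1 ⟨h2y, hly⟩
  refine ⟨?_, ?_⟩
  · rw [hx.exists_conj_mem_WD_iff hy, hx.minusCard_modEq_iff hy, hx.fval_modEq_iff hy,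
      Prod.ext_iff]
  · convert hx.ncard_conjugacyClasses hn₀ using 2
    ext X
    simp only [← and_assoc, WC.isFPFInvolution_iff hnm hn₀]
    constructor
    · rintro ⟨z, ⟨-, hz⟩, hX⟩
      exact ⟨z, hz, hX⟩
    · rintro ⟨z, hz, hX⟩
      exact ⟨z, ⟨hz.mem_WD, hz⟩, hX⟩

theorem WD_four_classes (n m : ℕ) (hnm : n = 2 * m) (hn : 4 ≤ n)
    (x y : WC n) (hx : x ∈ WD n) (hy : y ∈ WD n)
    (h2x : orderOf x = 2) (h2y : orderOf y = 2)
    (hlx : lct x = (m, 0, 0, 0)) (hly : lct y = (m, 0, 0, 0)) :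
    ((∃ g ∈ WD n, g⁻¹ * x * g = y) ↔
      (minusCard x ≡ minusCard y [MOD 4] ∧ fval x ≡ fval y [ZMOD 4])) ∧
    {X : Set (WC n) | ∃ z ∈ (WD n : Set (WC n)), orderOf z = 2 ∧ lct z = (m, 0, 0, 0) ∧
        X = ConjugacyClassOf (WD n) z}.ncard = 4 :=
  WD_four_classes_general n m hnm hn x y h2x h2y hlx hly
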